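/- arXiv:1008.4054 — 6 statements merged into one kernel-verified Lean document; each statement's English description precedes it below -/
import Mathlib

section
/- Let R be a commutative ring and A an R-algebra that is finitely generated projective as an R-module. If A is isomorphic to its R-linear dual A^∨ = Hom_R(A,R) as a left A-module (where A acts via (a·f)(x) = f(xa)), then A is isomorphic to A^∨ as a right A-module. -/
/-- If a finitely generated projective `R`-algebra `A` is isomorphic to its `R`-linear dual
`A^∨ = Hom_R(A,R)` as a left `A`-module (left action `(a·f)(x) = f(x*a)`), then it is
isomorphic to `A^∨` as a right `A`-module (right action `(f·a)(x) = f(a*x)`). -/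
theorem stmt_0 (R : Type*) (A : Type*) [CommRing R] [Ring A] [Algebra R A]
    [Module.Finite R A] [Module.Projective R A]
    (h : ∃ L : A ≃ₗ[R] (A →ₗ[R] R), ∀ a b x : A, L (a * b) x = L b (x * a)) :
    ∃ Rm : A ≃ₗ[R] (A →ₗ[R] R), ∀ a b x : A, Rm (b * a) x = Rm b (a * x) := by
  obtain ⟨L, hL⟩ := h
  refine ⟨(Module.evalEquiv R A).trans L.dualMap, ?_⟩
  intro a b x
  have key : ∀ b x : A, ((Module.evalEquiv R A).trans L.dualMap) b x = L x b := by
    intro b x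
    rfl
  rw [key, key, hL a x b]
end

section
/- Let (A,β) be a Frobenius R-algebra, M a left A-module finitely generated projective over R with End_A(M) ≅ R, and ω_M: Z(A) → R the central character (defined by x·m = ω_M(x)m for x ∈ Z(A)). Let z(M) = Σ_i χ_M(x_i) y_i where χ_M is the character of M and {x_i},{y_i} are dual bases for β. Then x·z(M) = ω_M(x)·z(M) for all x ∈ Z(A). -/
open Finset in
/-- Let `(A,β)` be a Frobenius `R`-algebra, `M` a left `A`-module that is f.g. projective
over `R` with `End_A(M) ≅ R`, and `ω : Z(A) → R` the central character. With
`z(M) = ∑ i χ_M(x_i) y_i` (where `χ_M` is the character of `M` and `{x_i},{y_i}` dual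
bases for `β`), we have `x z(M) = ω(x) z(M)` for all central `x`. -/
theorem stmt_6 (R : Type*) (A : Type*) (M : Type*) [CommRing R] [Ring A] [Algebra R A]
    [Module.Finite R A] [Module.Projective R A]
    [AddCommGroup M] [Module R M] [Module A M] [IsScalarTower R A M]
    [SMulCommClass R A M] [SMulCommClass A R M]
    [Module.Finite R M] [Module.Projective R M]
    (B : A →ₗ[R] A →ₗ[R] R)
    (hassoc : ∀ u v w : A, B (u * v) w = B u (v * w))
    (hns : Function.Bijective ⇑B.flip)
    (n : ℕ) (x y : Fin n → A)
    (hdual : ∀ a : A, a = ∑ i, B a (y i) • x i)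
    (hEnd : Function.Bijective fun r : R => (r • LinearMap.id : M →ₗ[A] M))
    (ω : A → R)
    (hω : ∀ u ∈ Set.center A, ∀ m : M, u • m = ω u • m) :
    ∀ u ∈ Set.center A,
      u * (∑ i, (LinearMap.trace R M (DistribMulAction.toLinearMap R M (x i))) • y i) =
        ω u • (∑ i, (LinearMap.trace R M (DistribMulAction.toLinearMap R M (x i))) • y i) := by
  intro u hu
  set χ : A → R := fun a => LinearMap.trace R M (DistribMulAction.toLinearMap R M a) with hχ
  set z : A := ∑ i, χ (x i) • y i with hzdef
  have hχadd : ∀ a b : A, χ (a + b) = χ a + χ b := by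
    intro a b
    have : DistribMulAction.toLinearMap R M (a + b)
        = DistribMulAction.toLinearMap R M a + DistribMulAction.toLinearMap R M b := by
      ext m; exact add_smul a b m
    simp [hχ, this]
  have hχsmul : ∀ (r : R) (a : A), χ (r • a) = r * χ a := by
    intro r a
    have : DistribMulAction.toLinearMap R M (r • a)
        = r • DistribMulAction.toLinearMap R M a := by
      ext m; exact smul_assoc r a m
    simp [hχ, this]
  have hz : ∀ a : A, B a z = χ a := by
    intro a
    have h1 : B a z = ∑ i, χ (x i) * B a (y i) := by
      simp [hzdef, map_sum, map_smul, smul_eq_mul]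
    have h2 : χ a = ∑ i, χ (x i) * B a (y i) := by
      conv_lhs => rw [hdual a]
      rw [show χ (∑ i, B a (y i) • x i) = ∑ i, χ (B a (y i) • x i) from
        map_sum (AddMonoidHom.mk' χ hχadd) _ _]
      simp [hχsmul, mul_comm]
    rw [h1, h2]
  have hχu : ∀ a : A, χ (a * u) = ω u * χ a := by
    intro a
    have : DistribMulAction.toLinearMap R M (a * u)
        = ω u • DistribMulAction.toLinearMap R M a := by
      ext m
      show (a * u) • m = ω u • a • m
      rw [mul_smul, hω u hu m, smul_comm]
    simp [hχ, this]
  have key : B.flip (u * z) = B.flip (ω u • z) := by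
    ext a
    show B a (u * z) = B a (ω u • z)
    rw [← hassoc, hz, map_smul, hz, hχu a, smul_eq_mul]
  exact hns.injective key
end

section
/- Let (A,β) be a symmetric R-algebra with Casimir element z = Σ_i x_i y_i, and M = Ae for an idempotent e with End_A(M) ≅ R. Then ω_M(z) · rank_R M = [A:M]_β · rank_R (e(M)A), where e(M) is the central idempotent [A:M]_β^{-1} z(M). -/
open Finset in
/-- Let `(A,β)` be a symmetric `R`-algebra with Casimir element `z = ∑ i x_i y_i`, and
`M = Ae` for an idempotent `e` with `End_A(M) ≅ R`. Then
`ω_M(z) · rank_R M = [A:M]_β · rank_R(e(M)A)`, where `e(M) = [A:M]_β⁻¹ z(M)`,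
`rank_R M = Tr_R(x ↦ x e)` and `rank_R (e(M)A) = Tr_R(x ↦ e(M) x)`. -/
theorem stmt_9 (R : Type*) (A : Type*) [CommRing R] [Ring A] [Algebra R A]
    [Module.Finite R A] [Module.Projective R A]
    (B : A →ₗ[R] A →ₗ[R] R)
    (hassoc : ∀ u v w : A, B (u * v) w = B u (v * w))
    (hsymm : ∀ u v : A, B u v = B v u)
    (n : ℕ) (x y : Fin n → A)
    (hdual : ∀ a : A, a = ∑ i, B a (y i) • x i)
    (e : A) (he : e * e = e)
    (hEnd1 : ∀ a : A, ∃ r : R, e * a * e = r • e)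
    (hEnd2 : ∀ r : R, r • e = 0 → r = 0)
    (ω : A → R)
    (hω : ∀ u ∈ Set.center A, u * e = ω u • e)
    (zM : A)
    (hzM : zM = ∑ i, (LinearMap.trace R A
        ((LinearMap.mulRight R e).comp (LinearMap.mulLeft R (x i)))) • y i)
    (eM : A) (heM : eM = B e 1 • zM) :
    ω (∑ i, x i * y i) * LinearMap.trace R A (LinearMap.mulRight R e) =
      ω zM * LinearMap.trace R A (LinearMap.mulLeft R eM) := by
  classical
  by_cases H : ∃ s : Finset A, Nonempty (Module.Basis s R A)
  swap
  · have h0 : LinearMap.trace R A = 0 := by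
      rw [LinearMap.trace, dif_neg H]
    rw [h0]
    simp
  obtain ⟨s, ⟨b⟩⟩ := H
  haveI : Module.Free R A := Module.Free.of_basis b
  -- nondegeneracy
  have hnd : ∀ u : A, (∀ v : A, B u v = 0) → u = 0 := by
    intro u h
    have hu := hdual u
    simpa [h] using hu
  have hnd2 : ∀ u v : A, (∀ w : A, B u w = B v w) → u = v := by
    intro u v h
    have h0 : u - v = 0 := hnd _ (fun w => by simp [h w])
    exact sub_eq_zero.mp h0
  -- second dual-basis identity
  have hdual2 : ∀ a : A, a = ∑ i, B a (x i) • y i := by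
    intro a
    refine (hnd2 (∑ i, B a (x i) • y i) a fun w => ?_).symm
    calc B (∑ i, B a (x i) • y i) w = ∑ i, B a (x i) * B (y i) w := by
          simp [smul_eq_mul]
      _ = ∑ i, B w (y i) * B a (x i) := by
          refine Finset.sum_congr rfl fun i _ => ?_
          rw [hsymm (y i) w, mul_comm]
      _ = B a (∑ i, B w (y i) • x i) := by
          rw [map_sum]
          simp [smul_eq_mul, mul_comm]
      _ = B a w := by rw [← hdual w]
  -- trace of an endomorphism of R
  have htrR : ∀ g : R →ₗ[R] R, LinearMap.trace R R g = g 1 := by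
    intro g
    have hg : g = g 1 • LinearMap.id := by
      ext
      simp [mul_comm]
    have hid : LinearMap.trace R R LinearMap.id = 1 := by
      rw [LinearMap.trace_eq_matrix_trace R (Module.Basis.singleton Unit R)]
      simp [LinearMap.toMatrix_id, Matrix.trace, Module.Basis.toMatrix_apply, Module.Basis.singleton_repr]
    conv_lhs => rw [hg]
    rw [map_smul, hid, smul_eq_mul, mul_one]
  -- trace formulas via dual bases
  have htr : ∀ f : A →ₗ[R] A, LinearMap.trace R A f = ∑ i, B (f (x i)) (y i) := by
    intro f
    have hf : f = ∑ i, (LinearMap.toSpanSingleton R A (f (x i))) ∘ₗ (B.flip (y i)) := by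
      ext a
      simp only [LinearMap.sum_apply, LinearMap.comp_apply, LinearMap.flip_apply,
        LinearMap.toSpanSingleton_apply]
      conv_lhs => rw [hdual a]
      simp
    conv_lhs => rw [hf]
    rw [map_sum]
    refine Finset.sum_congr rfl fun i _ => ?_
    rw [LinearMap.trace_comp_comm' (B.flip (y i)) (LinearMap.toSpanSingleton R A (f (x i))),
      htrR]
    simp
  have htr2 : ∀ f : A →ₗ[R] A, LinearMap.trace R A f = ∑ i, B (f (y i)) (x i) := by
    intro f
    have hf : f = ∑ i, (LinearMap.toSpanSingleton R A (f (y i))) ∘ₗ (B.flip (x i)) := by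
      ext a
      simp only [LinearMap.sum_apply, LinearMap.comp_apply, LinearMap.flip_apply,
        LinearMap.toSpanSingleton_apply]
      conv_lhs => rw [hdual2 a]
      simp
    conv_lhs => rw [hf]
    rw [map_sum]
    refine Finset.sum_congr rfl fun i _ => ?_
    rw [LinearMap.trace_comp_comm' (B.flip (x i)) (LinearMap.toSpanSingleton R A (f (y i))),
      htrR]
    simp
  -- z(M) = ∑ x_j e y_j
  have zM_eq : zM = ∑ j, x j * e * y j := by
    rw [hzM]
    have hcoef : ∀ i, LinearMap.trace R A
        ((LinearMap.mulRight R e).comp (LinearMap.mulLeft R (x i)))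
        = B (∑ j, x j * e * y j) (x i) := by
      intro i
      have hsw : B (∑ j, x j * e * y j) (x i) = ∑ j, B (x i) (x j * e * y j) := by
        rw [hsymm, map_sum]
      rw [htr, hsw]
      refine Finset.sum_congr rfl fun j _ => ?_
      simp only [LinearMap.comp_apply, LinearMap.mulLeft_apply, LinearMap.mulRight_apply]
      rw [hassoc (x i * (x j)) e (y j), hassoc (x i) (x j) (e * y j), mul_assoc (x j) e (y j)]
    calc (∑ i, LinearMap.trace R A
        ((LinearMap.mulRight R e).comp (LinearMap.mulLeft R (x i))) • y i)
        = ∑ i, B (∑ j, x j * e * y j) (x i) • y i := by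
          exact Finset.sum_congr rfl fun i _ => by rw [hcoef i]
      _ = ∑ j, x j * e * y j := (hdual2 _).symm
  -- elements ∑ x_j c y_j are central
  have hkey : ∀ (a : A) (j k : Fin n), B (a * x j) (y k) = B (y k * a) (x j) := by
    intro a j k
    rw [hassoc (y k) a (x j), hsymm]
  have hc : ∀ c a : A, a * (∑ j, x j * c * y j) = (∑ j, x j * c * y j) * a := by
    intro c a
    rw [Finset.mul_sum, Finset.sum_mul]
    have lhs : ∀ j, a * (x j * c * y j) = ∑ k, B (a * x j) (y k) • (x k * c * y j) := by
      intro j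
      have h1 : a * (x j * c * y j) = (a * x j) * c * y j := by
        rw [← mul_assoc, ← mul_assoc]
      rw [h1]
      conv_lhs => rw [hdual (a * x j)]
      rw [Finset.sum_mul, Finset.sum_mul]
      exact Finset.sum_congr rfl fun k _ => by rw [smul_mul_assoc, smul_mul_assoc]
    have rhs : ∀ j, (x j * c * y j) * a = ∑ k, B (y j * a) (x k) • (x j * c * y k) := by
      intro j
      rw [mul_assoc (x j * c) (y j) a]
      conv_lhs => rw [hdual2 (y j * a)]
      rw [Finset.mul_sum]
      exact Finset.sum_congr rfl fun k _ => by rw [mul_smul_comm]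
    calc ∑ j, a * (x j * c * y j)
        = ∑ j, ∑ k, B (a * x j) (y k) • (x k * c * y j) :=
          Finset.sum_congr rfl fun j _ => lhs j
      _ = ∑ k, ∑ j, B (a * x j) (y k) • (x k * c * y j) := Finset.sum_comm
      _ = ∑ k, (x k * c * y k) * a := by
          refine Finset.sum_congr rfl fun k _ => ?_
          rw [rhs k]
          exact Finset.sum_congr rfl fun j _ => by rw [hkey a j k]
  -- centrality of z and z(M)
  have hzc : (∑ i, x i * y i) ∈ Set.center A := by
    refine Semigroup.mem_center_iff.mpr fun g => ?_
    have h1 : (∑ i, x i * y i) = ∑ i, x i * 1 * y i := by simp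
    rw [h1]
    exact hc 1 g
  have hzMc : zM ∈ Set.center A := by
    refine Semigroup.mem_center_iff.mpr fun g => ?_
    rw [zM_eq]
    exact hc e g
  have hmulLeft_smul : ∀ (r : R) (u : A),
      LinearMap.mulLeft R (r • u) = r • LinearMap.mulLeft R u := by
    intro r u
    ext a
    simp [smul_mul_assoc]
  -- ∑ y_i x_i = ∑ x_i y_i
  have hz'z : (∑ i, y i * x i) = ∑ i, x i * y i := by
    refine hnd2 _ _ fun v => ?_
    have h1 : B (∑ i, y i * x i) v = ∑ i, B (x i * v) (y i) := by
      rw [map_sum, LinearMap.sum_apply]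
      refine Finset.sum_congr rfl fun i _ => ?_
      rw [hassoc (y i) (x i) v, hsymm]
    have h2 : B (∑ i, x i * y i) v = ∑ i, B (y i * v) (x i) := by
      rw [map_sum, LinearMap.sum_apply]
      refine Finset.sum_congr rfl fun i _ => ?_
      rw [hassoc (x i) (y i) v, hsymm]
    have t1 := htr (LinearMap.mulRight R v)
    have t2 := htr2 (LinearMap.mulRight R v)
    simp only [LinearMap.mulRight_apply] at t1 t2
    rw [h1, h2, ← t1, ← t2]
  -- trace(mulLeft e) = trace(mulRight e)
  have h4 : LinearMap.trace R A (LinearMap.mulLeft R e)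
      = LinearMap.trace R A (LinearMap.mulRight R e) := by
    rw [htr2 (LinearMap.mulLeft R e), htr (LinearMap.mulRight R e)]
    refine Finset.sum_congr rfl fun i _ => ?_
    simp only [LinearMap.mulLeft_apply, LinearMap.mulRight_apply]
    rw [hassoc (x i) e (y i), hsymm]
  -- trace(mulLeft zM) = ω(z) * trace(mulRight e)
  have hs : LinearMap.trace R A (LinearMap.mulLeft R zM)
      = ω (∑ i, x i * y i) * LinearMap.trace R A (LinearMap.mulRight R e) := by
    have h1 : LinearMap.mulLeft R zM
        = ∑ j, (LinearMap.mulLeft R (x j * e)) ∘ₗ (LinearMap.mulLeft R (y j)) := by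
      ext a
      simp only [LinearMap.sum_apply, LinearMap.comp_apply, LinearMap.mulLeft_apply]
      rw [zM_eq, Finset.sum_mul]
      exact Finset.sum_congr rfl fun j _ => by rw [mul_assoc]
    rw [h1, map_sum]
    have h2 : ∀ j, LinearMap.trace R A
        ((LinearMap.mulLeft R (x j * e)) ∘ₗ (LinearMap.mulLeft R (y j)))
        = LinearMap.trace R A (LinearMap.mulLeft R (y j * (x j * e))) := by
      intro j
      rw [LinearMap.trace_comp_comm', ← LinearMap.mulLeft_mul]
    rw [Finset.sum_congr rfl fun j _ => h2 j, ← map_sum]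
    have h3 : (∑ j, LinearMap.mulLeft R (y j * (x j * e)))
        = LinearMap.mulLeft R ((∑ j, x j * y j) * e) := by
      ext a
      simp only [LinearMap.sum_apply, LinearMap.mulLeft_apply]
      rw [← hz'z, Finset.sum_mul, Finset.sum_mul]
      refine Finset.sum_congr rfl fun j _ => ?_
      rw [mul_assoc (y j) (x j) e]
    rw [h3, hω _ hzc, hmulLeft_smul, map_smul, smul_eq_mul, h4]
  -- B zM e = 1
  have hQ : B zM e = 1 := by
    choose p hp using fun j => hEnd1 (x j)
    have h1 : B zM e = ∑ j, B e (y j) * p j := by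
      rw [zM_eq, map_sum, LinearMap.sum_apply]
      refine Finset.sum_congr rfl fun j _ => ?_
      calc B (x j * e * y j) e = B (x j * e) (y j * e) := hassoc _ _ _
        _ = B (y j * e) (x j * e) := hsymm _ _
        _ = B (y j) (e * (x j * e)) := hassoc _ _ _
        _ = B (y j) (p j • e) := by rw [← mul_assoc, hp j]
        _ = B e (y j) * p j := by
            rw [map_smul, smul_eq_mul, hsymm (y j) e, mul_comm]
    have h5 : e * (∑ j, B e (y j) • x j) * e = e := by rw [← hdual e, he, he]
    have h6 : e * (∑ j, B e (y j) • x j) * e = (∑ j, B e (y j) * p j) • e := by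
      rw [Finset.mul_sum, Finset.sum_mul, Finset.sum_smul]
      refine Finset.sum_congr rfl fun j _ => ?_
      rw [mul_smul_comm, smul_mul_assoc, hp j, smul_smul]
    have h7 : ((∑ j, B e (y j) * p j) - 1) • e = 0 := by
      rw [sub_smul, one_smul, ← h6, h5, sub_self]
    have h8 := hEnd2 _ h7
    rw [h1]
    exact sub_eq_zero.mp h8
  -- ω(zM) * B e 1 = 1
  have hfin : ω zM * B e 1 = 1 := by
    calc ω zM * B e 1 = B (ω zM • e) 1 := by rw [map_smul]; simp
      _ = B (zM * e) 1 := by rw [← hω zM hzMc]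
      _ = B zM (e * 1) := hassoc _ _ _
      _ = B zM e := by rw [mul_one]
      _ = 1 := hQ
  rw [heM, hmulLeft_smul, map_smul, smul_eq_mul, hs, ← mul_assoc, ← mul_assoc, hfin, one_mul]
end

section
/- Let (A,β) be a Frobenius R-algebra with an augmentation ε: A → R (an R-algebra homomorphism). Then the module of right integrals ∫^r_A = { t ∈ A : ta = ε(a)t for all a ∈ A } is free of rank 1 over R, generated by Λ_β = Σ_i ε(y_i) x_i, where {x_i},{y_i} are dual bases for β. -/
open Finset in
/-- Let `(A,β)` be a Frobenius `R`-algebra with an augmentation `ε : A → R`. Then the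
module of right integrals `∫ʳ_A = { t | t a = ε(a) t ∀ a }` is free of rank one over `R`,
generated by `Λ_β = ∑ i ε(y_i) x_i`. -/
theorem stmt_11 (R : Type*) (A : Type*) [CommRing R] [Ring A] [Algebra R A]
    [Module.Finite R A] [Module.Projective R A]
    (B : A →ₗ[R] A →ₗ[R] R)
    (hassoc : ∀ u v w : A, B (u * v) w = B u (v * w))
    (hns : Function.Bijective ⇑B.flip)
    (n : ℕ) (x y : Fin n → A)
    (hdual : ∀ a : A, a = ∑ i, B a (y i) • x i)
    (ε : A →ₐ[R] R)
    (Λ : A) (hΛ : Λ = ∑ i, ε (y i) • x i) :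
    (∀ a : A, Λ * a = ε a • Λ) ∧
    (∀ t : A, (∀ a : A, t * a = ε a • t) → ∃ r : R, t = r • Λ) ∧
    (∀ r : R, r • Λ = 0 → r = 0) := by
  -- the "other-sided" dual basis identity, using nondegeneracy
  have key2 : ∀ w : A, ∑ i, B (x i) w • y i = w := by
    intro w
    apply hns.injective
    ext u
    simp only [LinearMap.flip_apply]
    rw [map_sum]
    conv_rhs => rw [hdual u]
    rw [map_sum, LinearMap.sum_apply]
    refine Finset.sum_congr rfl fun i _ => ?_
    simp only [map_smul, LinearMap.smul_apply, smul_eq_mul]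
    ring
  -- key: B Λ w = ε w for all w
  have hK : ∀ w : A, B Λ w = ε w := by
    intro w
    rw [hΛ]
    conv_rhs => rw [← key2 w]
    rw [map_sum, map_sum, LinearMap.sum_apply]
    refine Finset.sum_congr rfl fun i _ => ?_
    simp only [map_smul, LinearMap.smul_apply, smul_eq_mul]
    ring
  have hΛa : ∀ a : A, Λ * a = ε a • Λ := by
    intro a
    conv_rhs => rw [hΛ]
    rw [hdual (Λ * a), Finset.smul_sum]
    refine Finset.sum_congr rfl fun i _ => ?_
    rw [hassoc, hK, map_mul, mul_smul]
  refine ⟨hΛa, ?_, ?_⟩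
  · intro t ht
    refine ⟨B t 1, ?_⟩
    conv_lhs => rw [hdual t]
    rw [hΛ, Finset.smul_sum]
    refine Finset.sum_congr rfl fun i _ => ?_
    have : B t (y i) = ε (y i) * B t 1 := by
      conv_lhs => rw [← mul_one (y i), ← hassoc, ht (y i)]
      simp [smul_eq_mul]
    rw [this, smul_smul, mul_comm]
  · intro r h
    have := congrArg (fun z => B z 1) h
    simp only [map_smul, LinearMap.smul_apply, map_zero, LinearMap.zero_apply,
      smul_eq_mul, hK, map_one, mul_one] at this
    exact this
end

section
/- Let (A,β,*) be a symmetric *-algebra over a subring R of the real numbers, with basis {x_i} satisfying β(x_i,x_j*) = δ_{ij}, and let z = Σ_i x_i* x_i be the Casimir element. Then the matrix of left multiplication by z on A with respect to {x_i} is symmetric and positive definite; in particular, all its eigenvalues are positive real numbers integral over R. -/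
set_option synthInstance.maxHeartbeats 1000000
set_option maxHeartbeats 1000000
open Finset in
/-- Let `(A,β,*)` be a symmetric `*`-algebra over a subring `R ⊆ ℝ` with basis `{x_i}`
satisfying `β(x_i,x_j*) = δ_{ij}`, and let `z = ∑ i x_i* x_i` be the Casimir element.
Then the matrix of left multiplication by `z` with respect to `{x_i}` is symmetric and
(viewed over `ℝ`) positive definite; in particular every eigenvalue is a positive real
number integral over `R`. -/
theorem stmt_14 (R : Subring ℝ) (A : Type*) [Ring A] [Algebra R A]
    (n : ℕ) (b : Module.Basis (Fin n) R A)
    (B : A →ₗ[R] A →ₗ[R] R)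
    (hassoc : ∀ u v w : A, B (u * v) w = B u (v * w))
    (hsymm : ∀ u v : A, B u v = B v u)
    (st : A →ₗ[R] A)
    (hstmul : ∀ u v : A, st (u * v) = st v * st u)
    (hstinv : ∀ u : A, st (st u) = u)
    (horth : ∀ i j, B (b i) (st (b j)) = if i = j then 1 else 0)
    (z : A) (hz : z = ∑ i, st (b i) * b i)
    (Z : Matrix (Fin n) (Fin n) R) (hZ : Z = LinearMap.toMatrix b b (LinearMap.mulLeft R z)) :
    Z.IsSymm ∧ (Z.map (R.subtype : R → ℝ)).PosDef ∧
      ∀ (c : ℝ) (v : Fin n → ℝ), v ≠ 0 →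
        (Z.map (R.subtype : R → ℝ)).mulVec v = c • v →
          0 < c ∧ (R.subtype : R →+* ℝ).IsIntegralElem c := by
  set f := (R.subtype : R →+* ℝ) with hf
  -- key: B u (st (b i)) = b.repr u i
  have key : ∀ (u : A) (i : Fin n), B u (st (b i)) = b.repr u i := by
    intro u i
    have h1 : B.flip (st (b i)) = b.coord i := by
      apply b.ext
      intro j
      simp [Module.Basis.coord_apply, horth j i, Finsupp.single_apply]
    simpa using LinearMap.congr_fun h1 u
  set C : Fin n → Matrix (Fin n) (Fin n) R :=
    fun k => LinearMap.toMatrix b b (LinearMap.mulLeft R (b k)) with hCdef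
  have hC : ∀ k m j, C k m j = b.repr (b k * b j) m := by
    intro k m j
    simp only [hCdef]
    rw [LinearMap.toMatrix_apply, LinearMap.mulLeft_apply]
  have hCB : ∀ k m j, B (b k * b j) (st (b m)) = C k m j := by
    intro k m j; rw [key, hC]
  have hexp : ∀ k i, b k * b i = ∑ m, C k m i • b m := by
    intro k i
    have h := b.sum_repr (b k * b i)
    rw [← h]
    exact (Finset.sum_congr rfl fun m _ => by rw [hC]).symm
  -- entries of Z
  have hZ' : ∀ i j, Z i j = ∑ k, ∑ m, C k m i * C k m j := by
    intro i j
    rw [hZ, LinearMap.toMatrix_apply, LinearMap.mulLeft_apply, ← key, hz, Finset.sum_mul,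
      map_sum, LinearMap.sum_apply]
    refine Finset.sum_congr rfl fun k _ => ?_
    rw [mul_assoc, hassoc, hsymm, hassoc, ← hstmul, hexp k i]
    simp only [map_sum, map_smul, smul_eq_mul]
    refine Finset.sum_congr rfl fun m _ => ?_
    rw [hCB]
  -- symmetry
  have hZsymm : Z.IsSymm := by
    refine Matrix.IsSymm.ext fun i j => ?_
    rw [hZ', hZ']
    exact Finset.sum_congr rfl fun k _ => Finset.sum_congr rfl fun m _ => mul_comm _ _
  -- the real matrix
  set M : Matrix (Fin n × Fin n) (Fin n) ℝ := fun km j => f (C km.1 km.2 j) with hM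
  have hfact : Z.map (⇑f) = M.conjTranspose * M := by
    ext i j
    rw [Matrix.map_apply, hZ', map_sum]
    simp only [Matrix.mul_apply, Matrix.conjTranspose_apply, star_trivial]
    rw [Fintype.sum_prod_type]
    refine Finset.sum_congr rfl fun k _ => ?_
    rw [map_sum]
    refine Finset.sum_congr rfl fun m _ => ?_
    rw [map_mul]
  -- the identity matrix decomposition
  have hone : ∀ j l : Fin n, (∑ k, b.repr (1:A) k * C k j l) = if j = l then 1 else 0 := by
    intro j l
    have h2 : (∑ k, b.repr (1:A) k • b k) * b l = b l := by rw [b.sum_repr, one_mul]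
    calc ∑ k, b.repr (1:A) k * C k j l
        = b.repr ((∑ k, b.repr (1:A) k • b k) * b l) j := by
          rw [Finset.sum_mul]
          simp only [smul_mul_assoc, map_sum, map_smul, Finsupp.coe_finset_sum,
            Finset.sum_apply, Finsupp.coe_smul, Pi.smul_apply, smul_eq_mul]
          exact Finset.sum_congr rfl fun k _ => by rw [hC]
      _ = b.repr (b l) j := by rw [h2]
      _ = if j = l then 1 else 0 := by
          simp [Module.Basis.repr_self, Finsupp.single_apply, eq_comm]
  -- injectivity over ℝ
  have hv0 : ∀ (v : Fin n → ℝ), (∀ k m, ∑ j, f (C k m j) * v j = 0) → v = 0 := by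
    intro v hv
    funext j
    have h3 : v j = ∑ l, (if j = l then (1:ℝ) else 0) * v l := by simp
    rw [h3]
    have h4 : ∀ l, (if j = l then (1:ℝ) else 0) = ∑ k, f (b.repr (1:A) k) * f (C k j l) := by
      intro l
      have := congrArg f (hone j l)
      rw [map_sum] at this
      simp only [map_mul] at this
      rw [this]
      split <;> simp
    calc ∑ l, (if j = l then (1:ℝ) else 0) * v l
        = ∑ l, ∑ k, f (b.repr (1:A) k) * f (C k j l) * v l := by
          exact Finset.sum_congr rfl fun l _ => by rw [h4, Finset.sum_mul]
      _ = ∑ k, f (b.repr (1:A) k) * ∑ l, f (C k j l) * v l := by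
          rw [Finset.sum_comm]
          refine Finset.sum_congr rfl fun k _ => ?_
          rw [Finset.mul_sum]
          exact Finset.sum_congr rfl fun l _ => by ring
      _ = 0 := by
          refine Finset.sum_eq_zero fun k _ => ?_
          rw [hv k j, mul_zero]
  have hMv : ∀ (v : Fin n → ℝ), v ≠ 0 → Matrix.mulVec M v ≠ 0 := by
    intro v hv hMv
    refine hv (hv0 v fun k m => ?_)
    have := congrFun hMv (k, m)
    simpa [Matrix.mulVec, dotProduct, hM] using this
  -- positive definiteness
  have hposdef : (Z.map (f : R → ℝ)).PosDef := by
    refine Matrix.PosDef.of_dotProduct_mulVec_pos ?_ fun v hv => ?_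
    · rw [hfact]
      exact Matrix.isHermitian_conjTranspose_mul_self M
    · rw [hfact, ← Matrix.mulVec_mulVec, Matrix.dotProduct_mulVec,
        Matrix.vecMul_conjTranspose, star_star]
      have h5 : Matrix.mulVec M v ≠ 0 := hMv v hv
      set w : Fin n × Fin n → ℝ := Matrix.mulVec M v with hw
      have h6 : ∀ p : Fin n × Fin n, 0 ≤ star (w p) * w p := fun p => by
        simpa using mul_self_nonneg (w p)
      have h6' : 0 ≤ dotProduct (star w) w :=
        Finset.sum_nonneg fun p _ => h6 p
      rcases h6'.lt_or_eq with h | h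
      · exact h
      · exfalso
        apply h5
        funext p
        have h8 := (Finset.sum_eq_zero_iff_of_nonneg
          (fun p _ => h6 p)).mp h.symm p (Finset.mem_univ p)
        simpa using mul_self_eq_zero.mp (by simpa using h8)
  refine ⟨hZsymm, hposdef, fun c v hv heig => ?_⟩
  -- eigenvalue positivity
  have hpos : 0 < c := by
    have h1 := hposdef.dotProduct_mulVec_pos hv
    rw [heig] at h1
    have h2 : dotProduct (star v) (c • v) = c * dotProduct v v := by
      simp only [dotProduct, Pi.smul_apply, smul_eq_mul, Finset.mul_sum, star_trivial,
        Pi.star_apply]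
      exact Finset.sum_congr rfl fun i _ => by ring
    rw [h2] at h1
    by_contra hc
    push_neg at hc
    have h3 : 0 ≤ dotProduct v v := Finset.sum_nonneg fun i _ => mul_self_nonneg _
    nlinarith
  refine ⟨hpos, Z.charpoly, Z.charpoly_monic, ?_⟩
  rw [Polynomial.eval₂_eq_eval_map, ← Matrix.charpoly_map]
  have hdet : (c • (1 : Matrix (Fin n) (Fin n) ℝ) - Z.map (f : R → ℝ)).det = 0 := by
    rw [← Matrix.exists_mulVec_eq_zero_iff]
    exact ⟨v, hv, by
      rw [Matrix.sub_mulVec, Matrix.smul_mulVec, Matrix.one_mulVec, heig, sub_self]⟩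
  have heval : ((Z.map (f : R → ℝ)).charpoly).eval c
      = (c • (1 : Matrix (Fin n) (Fin n) ℝ) - Z.map (f : R → ℝ)).det := by
    rw [Matrix.charpoly, ← Polynomial.coe_evalRingHom, RingHom.map_det]
    congr 1
    ext i j
    by_cases h : i = j <;>
      simp [h, Matrix.charmatrix_apply, Matrix.one_apply, Matrix.diagonal_apply]
  rw [heval, hdet]
end

section
/- Let G be a finite group and R a commutative ring. The group algebra RG is separable over R if and only if |G|·1 is a unit in R. (Maschke's theorem via the Frobenius/integral criterion: Λ = Σ_{g∈G} g is a two-sided integral with ε(Λ) = |G|·1.) -/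
set_option linter.unusedSectionVars false

open TensorProduct MonoidAlgebra

section Aux

variable (R : Type*) [CommRing R] (G : Type*) [Group G] [Fintype G]

noncomputable def epsAux : MonoidAlgebra R G →ₐ[R] R := MonoidAlgebra.lift R R G 1

noncomputable def FAux : MonoidAlgebra R G ⊗[R] MonoidAlgebra R G →ₗ[R] MonoidAlgebra R G :=
  TensorProduct.lift ((LinearMap.lsmul R (MonoidAlgebra R G)).comp (epsAux R G).toLinearMap)

variable {R G}

lemma epsAux_single (g : G) (r : R) : epsAux R G (MonoidAlgebra.single g r) = r := by
  simp [epsAux]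

lemma FAux_tmul (x y : MonoidAlgebra R G) : FAux R G (x ⊗ₜ[R] y) = epsAux R G x • y := rfl

lemma FAux_lmul (g : G) (s : MonoidAlgebra R G ⊗[R] MonoidAlgebra R G) :
    FAux R G ((MonoidAlgebra.single g 1 ⊗ₜ[R] (1 : MonoidAlgebra R G)) * s) = FAux R G s := by
  induction s using TensorProduct.induction_on with
  | zero => simp
  | tmul x y => simp [Algebra.TensorProduct.tmul_mul_tmul, FAux_tmul, map_mul, epsAux_single]
  | add x y hx hy => rw [mul_add, map_add, map_add, hx, hy]

lemma FAux_rmul (a : MonoidAlgebra R G) (s : MonoidAlgebra R G ⊗[R] MonoidAlgebra R G) :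
    FAux R G (s * ((1 : MonoidAlgebra R G) ⊗ₜ[R] a)) = FAux R G s * a := by
  induction s using TensorProduct.induction_on with
  | zero => simp
  | tmul x y => simp [Algebra.TensorProduct.tmul_mul_tmul, FAux_tmul, smul_mul_assoc]
  | add x y hx hy => rw [add_mul, map_add, map_add, hx, hy, add_mul]

lemma eps_FAux (s : MonoidAlgebra R G ⊗[R] MonoidAlgebra R G) :
    epsAux R G (FAux R G s) = epsAux R G (LinearMap.mul' R (MonoidAlgebra R G) s) := by
  induction s using TensorProduct.induction_on with
  | zero => simp
  | tmul x y => simp [FAux_tmul, LinearMap.mul'_apply, map_mul, smul_eq_mul]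
  | add x y hx hy => rw [map_add, map_add, map_add, map_add, hx, hy]

lemma epsAux_eq_sum (t : MonoidAlgebra R G) : epsAux R G t = ∑ g : G, t.coeff g := by
  rw [epsAux, MonoidAlgebra.lift_apply]
  rw [Finsupp.sum_fintype]
  · simp
  · intro g; simp

end Aux

open TensorProduct in
/-- Maschke: the group algebra `RG` of a finite group `G` over a commutative ring `R` is
separable over `R` (expressed by the existence of a separability idempotent) if and only
if `|G|·1` is a unit in `R`. -/
theorem stmt_16 (R : Type*) [CommRing R] (G : Type*) [Group G] [Fintype G] :
    (∃ s : MonoidAlgebra R G ⊗[R] MonoidAlgebra R G,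
        LinearMap.mul' R (MonoidAlgebra R G) s = 1 ∧
        ∀ a : MonoidAlgebra R G,
          (a ⊗ₜ[R] (1 : MonoidAlgebra R G)) * s = s * ((1 : MonoidAlgebra R G) ⊗ₜ[R] a)) ↔
      IsUnit ((Fintype.card G : R)) := by
  constructor
  · rintro ⟨s, hs, hc⟩
    set t := FAux R G s with ht
    have ht1 : ∀ g : G, t.coeff g = t.coeff 1 := by
      intro g
      have h1 : t * MonoidAlgebra.single g 1 = t := by
        rw [ht, ← FAux_rmul, ← hc, FAux_lmul]
      have := congrArg (fun f : MonoidAlgebra R G => f.coeff g) h1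
      simpa [MonoidAlgebra.mul_single_apply] using this.symm
    have heps : epsAux R G t = 1 := by
      rw [ht, eps_FAux, hs, map_one]
    rw [epsAux_eq_sum] at heps
    have : (Fintype.card G : R) * t.coeff 1 = 1 := by
      rw [← heps]
      rw [Finset.sum_congr rfl (fun g _ => ht1 g), Finset.sum_const, Finset.card_univ,
        nsmul_eq_mul]
    exact IsUnit.of_mul_eq_one _ this
  · intro hu
    obtain ⟨c, hcard⟩ := hu.exists_right_inv
    refine ⟨∑ g : G, MonoidAlgebra.single (g⁻¹) c ⊗ₜ[R] MonoidAlgebra.single g 1, ?_, ?_⟩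
    · rw [map_sum]
      have : ∀ g : G, LinearMap.mul' R (MonoidAlgebra R G)
          (MonoidAlgebra.single (g⁻¹) c ⊗ₜ[R] MonoidAlgebra.single g 1)
          = MonoidAlgebra.single (1 : G) c := by
        intro g
        rw [LinearMap.mul'_apply, MonoidAlgebra.single_mul_single]
        simp
      rw [Finset.sum_congr rfl (fun g _ => this g)]
      rw [Finset.sum_const, Finset.card_univ, ← Nat.cast_smul_eq_nsmul R,
        MonoidAlgebra.smul_single, smul_eq_mul, hcard, MonoidAlgebra.one_def]
    · intro a
      induction a using MonoidAlgebra.induction_on with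
      | of g =>
        rw [Finset.mul_sum, Finset.sum_mul]
        refine Fintype.sum_equiv (Equiv.mulRight g⁻¹) _ _ ?_
        intro k
        simp only [Equiv.coe_mulRight, Algebra.TensorProduct.tmul_mul_tmul,
          MonoidAlgebra.of_apply, MonoidAlgebra.single_mul_single, one_mul, mul_one,
          mul_inv_rev, inv_inv, inv_mul_cancel_right]
      | add a b ha hb =>
        rw [add_tmul, tmul_add, add_mul, mul_add, ha, hb]
      | smul r a ha =>
        rw [← smul_tmul', smul_mul_assoc, ha, tmul_smul, mul_smul_comm]
end
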